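/- Let α ∈ (0,1) be irrational and let m be a positive integer. If the longest arc determined by points 0 and {−mα} on the circle has length D, then, in the special case k = 1, the maximal exponent of an abelian power of period m occurring in some Sturmian word of slope α equals ⌊D/‖mα‖⌋ + γ, where γ = 1 if D ≠ ‖mα‖ and γ = 0 otherwise. -/

import Mathlib

/-- Distance of a real number to the nearest integer. -/
noncomputable def distNearestInt (x : ℝ) : ℝ := min (Int.fract x) (1 - Int.fract x)

/-- The `n`-th letter of the Sturmian word of slope `α` and intercept `x`:
`s(n) = ⌊(n+1)α + x⌋ − ⌊nα + x⌋`. -/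
noncomputable def sturmianLetter (α x : ℝ) (n : ℕ) : ℤ :=
  ⌊((n : ℝ) + 1) * α + x⌋ - ⌊(n : ℝ) * α + x⌋

/-- The `j`-th block of length `m` of the Sturmian word of slope `α` and intercept `x`. -/
noncomputable def sturmianBlock (α x : ℝ) (m j : ℕ) : List ℤ :=
  (List.range m).map (fun i => sturmianLetter α x (j * m + i))

/-- Abelian equivalence of words over `{0,1} ⊆ ℤ`. -/
def AbelianEq (u v : List ℤ) : Prop :=
  u.count 0 = v.count 0 ∧ u.count 1 = v.count 1

/-- The Sturmian word of slope `α` and intercept `x` begins with an abelian power of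
period `m` and exponent `n`. -/
def BeginsWithAbelianPower (α x : ℝ) (m n : ℕ) : Prop :=
  ∀ i < n, ∀ j < n, AbelianEq (sturmianBlock α x m i) (sturmianBlock α x m j)

lemma count_aux (L : List ℤ) (h : ∀ a ∈ L, a = 0 ∨ a = 1) :
    (L.count 1 : ℤ) = L.sum ∧ (L.count 0 : ℤ) = (L.length : ℤ) - L.sum := by
  induction L with
  | nil => simp
  | cons a t ih =>
    obtain ⟨ih1, ih2⟩ := ih fun b hb => h b (List.mem_cons_of_mem _ hb)
    rcases h a (List.mem_cons_self) with rfl | rfl <;>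
      refine ⟨?_, ?_⟩ <;>
      simp [List.count_cons] <;>
      push_cast <;> omega

lemma letter01 (α x : ℝ) (hα0 : 0 < α) (hα1 : α < 1) (n : ℕ) :
    sturmianLetter α x n = 0 ∨ sturmianLetter α x n = 1 := by
  unfold sturmianLetter
  have h1 : ⌊(n:ℝ)*α + x⌋ ≤ ⌊((n:ℝ)+1)*α + x⌋ := Int.floor_le_floor (by nlinarith)
  have h2 : ⌊((n:ℝ)+1)*α + x⌋ ≤ ⌊(n:ℝ)*α + x⌋ + 1 := by
    have h : ((n:ℝ)+1)*α + x ≤ ((n:ℝ)*α + x) + 1 := by nlinarith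
    calc ⌊((n:ℝ)+1)*α + x⌋ ≤ ⌊((n:ℝ)*α + x) + 1⌋ := Int.floor_le_floor h
      _ = ⌊(n:ℝ)*α + x⌋ + 1 := Int.floor_add_one _
  omega

lemma floor_shift (β y : ℝ) :
    ⌊y + β⌋ - ⌊y⌋ = ⌊β⌋ + (if (1:ℝ) ≤ Int.fract y + Int.fract β then 1 else 0) := by
  have key : ⌊y + β⌋ = ⌊y⌋ + ⌊β⌋ + ⌊Int.fract y + Int.fract β⌋ := by
    have h1 : y + β = ((⌊y⌋ + ⌊β⌋ : ℤ) : ℝ) + (Int.fract y + Int.fract β) := by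
      push_cast
      have hy := Int.floor_add_fract y
      have hb := Int.floor_add_fract β
      linarith
    rw [h1, Int.floor_intCast_add]
  have hs0 : (0:ℝ) ≤ Int.fract y + Int.fract β :=
    add_nonneg (Int.fract_nonneg _) (Int.fract_nonneg _)
  have hs2 : Int.fract y + Int.fract β < 2 := by
    linarith [Int.fract_lt_one y, Int.fract_lt_one β]
  rw [key]
  split_ifs with h
  · have : ⌊Int.fract y + Int.fract β⌋ = 1 := by
      rw [Int.floor_eq_iff]
      constructor <;> push_cast <;> linarith
    omega
  · have : ⌊Int.fract y + Int.fract β⌋ = 0 := by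
      rw [Int.floor_eq_iff]
      constructor <;> push_cast <;> [linarith; linarith]
    omega

lemma block_sum (α x : ℝ) (m j : ℕ) :
    (sturmianBlock α x m j).sum =
      ⌊((j:ℝ)*((m:ℝ)*α) + x) + (m:ℝ)*α⌋ - ⌊(j:ℝ)*((m:ℝ)*α) + x⌋ := by
  have key : ∀ i : ℕ, sturmianLetter α x (j*m+i) =
      (fun i : ℕ => ⌊(((j*m+i:ℕ)):ℝ)*α + x⌋) (i+1) -
      (fun i : ℕ => ⌊(((j*m+i:ℕ)):ℝ)*α + x⌋) i := by
    intro i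
    simp only [sturmianLetter]
    congr 2 <;> push_cast <;> ring
  calc (sturmianBlock α x m j).sum
      = ∑ i ∈ Finset.range m, sturmianLetter α x (j*m+i) := rfl
    _ = ∑ i ∈ Finset.range m, ((fun i : ℕ => ⌊(((j*m+i:ℕ)):ℝ)*α + x⌋) (i+1) -
          (fun i : ℕ => ⌊(((j*m+i:ℕ)):ℝ)*α + x⌋) i) :=
        Finset.sum_congr rfl (fun i _ => key i)
    _ = ⌊(((j*m+m:ℕ)):ℝ)*α + x⌋ - ⌊(((j*m+0:ℕ)):ℝ)*α + x⌋ := Finset.sum_range_sub (fun i : ℕ => ⌊(((j*m+i:ℕ)):ℝ)*α + x⌋) m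
    _ = _ := by
        congr 2 <;> push_cast <;> ring

lemma fract_step (a b : ℝ) : Int.fract (a + b) = Int.fract (Int.fract a + Int.fract b) := by
  rw [Int.fract_eq_fract]
  refine ⟨⌊a⌋ + ⌊b⌋, ?_⟩
  push_cast
  linarith [Int.self_sub_fract a, Int.self_sub_fract b]

lemma beginsWith_iff (α x : ℝ) (hα0 : 0 < α) (hα1 : α < 1) (m n : ℕ) :
    BeginsWithAbelianPower α x m n ↔
      ∀ i < n, ∀ j < n,
        ((1:ℝ) ≤ Int.fract ((i:ℝ)*((m:ℝ)*α) + x) + Int.fract ((m:ℝ)*α) ↔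
          (1:ℝ) ≤ Int.fract ((j:ℝ)*((m:ℝ)*α) + x) + Int.fract ((m:ℝ)*α)) := by
  have h01 : ∀ j, ∀ a ∈ sturmianBlock α x m j, a = 0 ∨ a = 1 := by
    intro j a ha
    simp only [sturmianBlock, List.mem_map] at ha
    obtain ⟨i, -, rfl⟩ := ha
    exact letter01 α x hα0 hα1 _
  have hlen : ∀ j, ((sturmianBlock α x m j).length : ℤ) = (m : ℤ) := by
    intro j; simp [sturmianBlock]
  have hab : ∀ i j, AbelianEq (sturmianBlock α x m i) (sturmianBlock α x m j) ↔
      (sturmianBlock α x m i).sum = (sturmianBlock α x m j).sum := by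
    intro i j
    obtain ⟨hi1, hi0⟩ := count_aux _ (h01 i)
    obtain ⟨hj1, hj0⟩ := count_aux _ (h01 j)
    constructor
    · rintro ⟨-, h1⟩
      rw [← hi1, ← hj1, h1]
    · intro h
      constructor
      · have : ((sturmianBlock α x m i).count 0 : ℤ) =
            ((sturmianBlock α x m j).count 0 : ℤ) := by
          rw [hi0, hj0, hlen i, hlen j, h]
        exact_mod_cast this
      · have : ((sturmianBlock α x m i).count 1 : ℤ) =
            ((sturmianBlock α x m j).count 1 : ℤ) := by
          rw [hi1, hj1, h]
        exact_mod_cast this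
  have hsum : ∀ j : ℕ, (sturmianBlock α x m j).sum =
      ⌊(m:ℝ)*α⌋ + (if (1:ℝ) ≤ Int.fract ((j:ℝ)*((m:ℝ)*α) + x) + Int.fract ((m:ℝ)*α)
        then 1 else 0) := by
    intro j
    rw [block_sum, floor_shift]
  unfold BeginsWithAbelianPower
  constructor
  · intro H i hi j hj
    have h := (hab i j).mp (H i hi j hj)
    rw [hsum i, hsum j] at h
    split_ifs at h with h1 h2 h2 <;> first | tauto | exact absurd h (by omega)
  · intro H i hi j hj
    refine (hab i j).mpr ?_
    rw [hsum i, hsum j]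
    have h := H i hi j hj
    split_ifs with h1 h2 h2 <;>
      first | rfl | (exact absurd (h.mp h1) h2) | (exact absurd (h.mpr h2) h1)

lemma run_up (β x : ℝ) (n : ℕ)
    (hall : ∀ j < n, Int.fract ((j:ℝ)*β + x) + Int.fract β < 1) :
    ∀ j < n, Int.fract ((j:ℝ)*β + x) = Int.fract x + (j:ℝ)*Int.fract β := by
  intro j
  induction j with
  | zero => intro _; norm_num
  | succ k ih =>
    intro hk
    have hk' : k < n := by omega
    have h1 := ih (by omega)
    have h2 : Int.fract (((k:ℝ)+1)*β + x) =
        Int.fract (Int.fract ((k:ℝ)*β + x) + Int.fract β) := by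
      rw [show ((k:ℝ)+1)*β + x = ((k:ℝ)*β + x) + β by ring, fract_step]
    have h3 : Int.fract (Int.fract ((k:ℝ)*β + x) + Int.fract β) =
        Int.fract ((k:ℝ)*β + x) + Int.fract β :=
      Int.fract_eq_self.mpr
        ⟨add_nonneg (Int.fract_nonneg _) (Int.fract_nonneg _), hall k hk'⟩
    push_cast
    rw [h2, h3, h1]
    ring

lemma run_down (β x : ℝ) (n : ℕ)
    (hall : ∀ j < n, 1 ≤ Int.fract ((j:ℝ)*β + x) + Int.fract β) :
    ∀ j < n, Int.fract ((j:ℝ)*β + x) = Int.fract x - (j:ℝ)*(1 - Int.fract β) := by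
  intro j
  induction j with
  | zero => intro _; norm_num
  | succ k ih =>
    intro hk
    have hk' : k < n := by omega
    have h1 := ih (by omega)
    have h2 : Int.fract (((k:ℝ)+1)*β + x) =
        Int.fract (Int.fract ((k:ℝ)*β + x) + Int.fract β) := by
      rw [show ((k:ℝ)+1)*β + x = ((k:ℝ)*β + x) + β by ring, fract_step]
    have h3 : Int.fract (Int.fract ((k:ℝ)*β + x) + Int.fract β) =
        Int.fract ((k:ℝ)*β + x) + Int.fract β - 1 := by
      rw [Int.fract_eq_iff]
      have hu1 := Int.fract_lt_one ((k:ℝ)*β + x)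
      have hf1 := Int.fract_lt_one β
      have hge := hall k hk'
      exact ⟨by linarith, by linarith, ⟨1, by push_cast; ring⟩⟩
    push_cast
    rw [h2, h3, h1]
    ring

/-- The maximal exponent of an abelian power of period `m` occurring in some Sturmian
word of slope `α` equals `⌊D/‖mα‖⌋ + γ`, where `D` is the length of the longest of the
two arcs determined by the points `0` and `{−mα}` on the circle, and `γ = 1` if
`D ≠ ‖mα‖`, `γ = 0` otherwise. -/
theorem max_abelian_exponent (α : ℝ) (hα : Irrational α) (hmem : α ∈ Set.Ioo (0:ℝ) 1)
    (m : ℕ) (hm : 1 ≤ m) :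
    IsGreatest {n : ℕ | 1 ≤ n ∧ ∃ x : ℝ, BeginsWithAbelianPower α x m n}
      (⌊max (Int.fract (-(m : ℝ) * α)) (1 - Int.fract (-(m : ℝ) * α)) /
          distNearestInt ((m : ℝ) * α)⌋₊ +
        if max (Int.fract (-(m : ℝ) * α)) (1 - Int.fract (-(m : ℝ) * α)) =
            distNearestInt ((m : ℝ) * α) then 0 else 1) := by
  obtain ⟨hα0, hα1⟩ := hmem
  have hβirr : Irrational ((m:ℝ)*α) := hα.natCast_mul (by omega)
  set β : ℝ := (m:ℝ)*α with hβdef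
  set f : ℝ := Int.fract β with hfdef
  have hfirr : Irrational f := by
    have h : f = β - (⌊β⌋ : ℝ) := (Int.self_sub_floor β).symm
    rw [h]
    exact hβirr.sub_intCast _
  have hfne : f ≠ 0 := by
    have h := hfirr.ne_rat 0
    simpa using h
  have hf0 : 0 < f := by
    have hge : (0:ℝ) ≤ f := Int.fract_nonneg β
    exact hge.lt_of_ne hfne.symm
  have hf1 : f < 1 := Int.fract_lt_one β
  have hfhalf : f ≠ 1/2 := by
    intro h
    exact hfirr.ne_rat (1/2) (by rw [h]; norm_num)
  have hbf : β - f = (⌊β⌋ : ℝ) := Int.self_sub_fract β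
  have hneg : Int.fract (-(m:ℝ) * α) = 1 - f := by
    rw [show -(m:ℝ)*α = -β by rw [hβdef]; ring, Int.fract_neg hf0.ne']
  set δ : ℝ := min f (1-f) with hδdef
  have hdist : distNearestInt β = δ := rfl
  have hD : max (Int.fract (-(m:ℝ) * α)) (1 - Int.fract (-(m:ℝ) * α)) = 1 - δ := by
    rw [hneg, show (1 : ℝ) - (1 - f) = f by ring]
    rcases le_total f (1-f) with h | h
    · rw [hδdef, min_eq_left h, max_eq_left h]
    · rw [hδdef, min_eq_right h, max_eq_right h]; ring
  have hδ0 : 0 < δ := lt_min hf0 (by linarith)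
  have hδhalf : δ < 1/2 := by
    rcases lt_or_gt_of_ne hfhalf with h | h
    · exact (min_le_left _ _).trans_lt h
    · exact (min_le_right _ _).trans_lt (by linarith)
  have hne : (1 : ℝ) - δ ≠ δ := by intro h; linarith
  rw [hD, hdist, if_neg hne]
  set N : ℕ := ⌊(1-δ)/δ⌋₊ with hNdef
  have hNle : (N : ℝ) * δ ≤ 1 - δ := by
    have h1 : (N : ℝ) ≤ (1-δ)/δ := Nat.floor_le (div_nonneg (by linarith) hδ0.le)
    calc (N : ℝ) * δ ≤ ((1-δ)/δ) * δ := mul_le_mul_of_nonneg_right h1 hδ0.le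
      _ = 1 - δ := div_mul_cancel₀ _ hδ0.ne'
  have hNne : (N : ℝ) * δ ≠ 1 - δ := by
    intro h
    rcases le_total f (1-f) with hle | hle
    · have he : δ = f := by rw [hδdef, min_eq_left hle]
      rw [he] at h
      refine hfirr.ne_rat (((N:ℚ)+1)⁻¹) ?_
      have hN1 : ((N:ℝ)+1) ≠ 0 := by positivity
      push_cast
      field_simp
      linear_combination h
    · have he : δ = 1-f := by rw [hδdef, min_eq_right hle]
      rw [he] at h
      refine hfirr.ne_rat ((N:ℚ)/((N:ℚ)+1)) ?_
      have hN1 : ((N:ℝ)+1) ≠ 0 := by positivity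
      push_cast
      field_simp
      linear_combination -h
  constructor
  · -- membership
    simp only [Set.mem_setOf_eq]
    refine ⟨by omega, ?_⟩
    rcases lt_or_gt_of_ne hfhalf with hflt | hfgt
    · -- f < 1/2, δ = f
      have he : δ = f := by rw [hδdef, min_eq_left (by linarith)]
      have hNf : (N:ℝ) * f < 1 - f := by
        rw [he] at hNle hNne
        exact hNle.lt_of_ne hNne
      refine ⟨0, ?_⟩
      rw [beginsWith_iff α 0 hα0 hα1 m (N+1)]
      simp only [← hβdef, ← hfdef]
      have hcond : ∀ j < N+1, ¬ ((1:ℝ) ≤ Int.fract ((j:ℝ)*β + 0) + f) := by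
        intro j hj
        have hjN : (j:ℝ) ≤ (N:ℝ) := by exact_mod_cast Nat.lt_succ_iff.mp hj
        have hjf2 : (j:ℝ)*f ≤ (N:ℝ)*f := mul_le_mul_of_nonneg_right hjN hf0.le
        have hjf : Int.fract ((j:ℝ)*β + 0) = (j:ℝ)*f := by
          rw [add_zero, Int.fract_eq_iff]
          refine ⟨by positivity, by linarith, ⟨(j:ℤ)*⌊β⌋, ?_⟩⟩
          push_cast
          rw [← hbf]
          ring
        rw [hjf]
        linarith
      intro i hi j hj
      exact iff_of_false (hcond i hi) (hcond j hj)
    · -- f > 1/2, δ = 1-f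
      have he : δ = 1-f := by rw [hδdef, min_eq_right (by linarith)]
      have hNf : (N:ℝ) * (1-f) < f := by
        rw [he] at hNle hNne
        have h := hNle.lt_of_ne hNne
        linarith
      set ε : ℝ := (f - (N:ℝ)*(1-f))/2 with hεdef
      have hε0 : 0 < ε := by rw [hεdef]; linarith
      refine ⟨1 - ε, ?_⟩
      rw [beginsWith_iff α (1-ε) hα0 hα1 m (N+1)]
      simp only [← hβdef, ← hfdef]
      have hcond : ∀ j < N+1, (1:ℝ) ≤ Int.fract ((j:ℝ)*β + (1-ε)) + f := by
        intro j hj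
        have hjN : (j:ℝ) ≤ (N:ℝ) := by exact_mod_cast Nat.lt_succ_iff.mp hj
        have hj1f : (j:ℝ)*(1-f) ≤ (N:ℝ)*(1-f) :=
          mul_le_mul_of_nonneg_right hjN (by linarith)
        have hj0 : (0:ℝ) ≤ (j:ℝ)*(1-f) :=
          mul_nonneg (Nat.cast_nonneg j) (by linarith)
        have hjf : Int.fract ((j:ℝ)*β + (1-ε)) = 1 - ε - (j:ℝ)*(1-f) := by
          rw [Int.fract_eq_iff]
          refine ⟨by linarith, by linarith, ⟨(j:ℤ)*⌊β⌋ + (j:ℤ), ?_⟩⟩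
          push_cast
          rw [← hbf]
          ring
        rw [hjf]
        linarith
      intro i hi j hj
      exact iff_of_true (hcond i hi) (hcond j hj)
  · -- upper bound
    rintro n ⟨hn1, x, hx⟩
    rw [beginsWith_iff α x hα0 hα1 m n] at hx
    simp only [← hβdef, ← hfdef] at hx
    obtain ⟨k, rfl⟩ : ∃ k, n = k + 1 := ⟨n - 1, by omega⟩
    have hδf : δ ≤ f := min_le_left _ _
    have hδ1f : δ ≤ 1 - f := min_le_right _ _
    have hk0 : (0:ℝ) ≤ (k:ℝ) := Nat.cast_nonneg k
    have hkN : k ≤ N := by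
      rw [hNdef]
      apply Nat.le_floor
      rw [le_div_iff₀ hδ0]
      by_cases hP : (1:ℝ) ≤ Int.fract (((0:ℕ):ℝ)*β + x) + f
      · have hall : ∀ j < k+1, 1 ≤ Int.fract ((j:ℝ)*β + x) + Int.fract β := by
          intro j hj
          rw [← hfdef]
          exact (hx j hj 0 (by omega)).mpr hP
        have hlast := run_down β x (k+1) hall k (by omega)
        rw [← hfdef] at hlast
        have hge := hall k (by omega)
        rw [← hfdef] at hge
        have hx1 : Int.fract x < 1 := Int.fract_lt_one x
        have h1 : (k:ℝ)*(1-f) < f := by linarith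
        have h2 : (k:ℝ)*δ ≤ (k:ℝ)*(1-f) := mul_le_mul_of_nonneg_left hδ1f hk0
        linarith
      · have hall : ∀ j < k+1, Int.fract ((j:ℝ)*β + x) + Int.fract β < 1 := by
          intro j hj
          rw [← hfdef]
          by_contra hc
          exact hP ((hx j hj 0 (by omega)).mp (not_lt.mp hc))
        have hlast := run_up β x (k+1) hall k (by omega)
        rw [← hfdef] at hlast
        have hlt := hall k (by omega)
        rw [← hfdef] at hlt
        have hx0 : 0 ≤ Int.fract x := Int.fract_nonneg x
        have h1 : (k:ℝ)*f < 1 - f := by linarith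
        have h2 : (k:ℝ)*δ ≤ (k:ℝ)*f := mul_le_mul_of_nonneg_left hδf hk0
        linarith
    omega
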